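/- Suppose Ω ⊂ ℙ(ℝ^d) is a properly convex domain, 𝒞 ⊆ Ω is a closed convex subset, and a_1, …, a_m ∈ Aut(Ω). For r > 0 let M_r := {x ∈ 𝒞 : H_Ω(x, a_j x) ≤ r for all 1 ≤ j ≤ m}. Then ConvHull_Ω(M_r) ⊆ M_{2^{d−1} r}; that is, every point p of the convex hull of M_r satisfies H_Ω(p, a_j p) ≤ 2^{d−1} r for all 1 ≤ j ≤ m. -/

import Mathlib

open scoped LinearAlgebra.Projectivization Pointwise
open Projectivization Matrix

namespace CCProj

abbrev PSp (d : ℕ) := ℙ ℝ (Fin d → ℝ)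

noncomputable instance (d : ℕ) : TopologicalSpace (PSp d) :=
  inferInstanceAs (TopologicalSpace (Quotient (projectivizationSetoid ℝ (Fin d → ℝ))))

variable {d : ℕ}

noncomputable def glEquivHom (d : ℕ) :
    GL (Fin d) ℝ →* ((Fin d → ℝ) ≃ₗ[ℝ] (Fin d → ℝ)) :=
  (Matrix.GeneralLinearGroup.toLin.trans
    (LinearMap.GeneralLinearGroup.generalLinearEquiv ℝ (Fin d → ℝ))).toMonoidHom

noncomputable def projPerm (e : (Fin d → ℝ) ≃ₗ[ℝ] (Fin d → ℝ)) : Equiv.Perm (PSp d) where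
  toFun := Projectivization.map e.toLinearMap e.injective
  invFun := Projectivization.map e.symm.toLinearMap e.symm.injective
  left_inv x := by
    induction x using Projectivization.ind with
    | h v hv => simp [Projectivization.map_mk]
  right_inv x := by
    induction x using Projectivization.ind with
    | h v hv => simp [Projectivization.map_mk]

noncomputable def glToPerm (d : ℕ) : GL (Fin d) ℝ →* Equiv.Perm (PSp d) where
  toFun g := projPerm (glEquivHom d g)
  map_one' := by
    ext x
    induction x using Projectivization.ind with
    | h v hv => simp [projPerm, Projectivization.map_mk]
  map_mul' g h := by
    ext x
    induction x using Projectivization.ind with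
    | h v hv => simp [projPerm, Projectivization.map_mk]

abbrev PGL (d : ℕ) := GL (Fin d) ℝ ⧸ (glToPerm d).ker

noncomputable def pglPerm (d : ℕ) : PGL d →* Equiv.Perm (PSp d) :=
  QuotientGroup.lift _ (glToPerm d) (fun _ hg => hg)

noncomputable instance : MulAction (PGL d) (PSp d) :=
  MulAction.compHom _ (pglPerm d)

/-! ### Convexity in projective space -/

/-- The affine chart associated to a linear functional `f`: a projective point `x` with
`f(x.rep) ≠ 0` is sent to the unique representative `v` of `x` with `f v = 1`. -/
noncomputable def chartMap (f : (Fin d → ℝ) →ₗ[ℝ] ℝ) (x : PSp d) : Fin d → ℝ :=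
  (f x.rep)⁻¹ • x.rep

/-- A set `C ⊆ ℙ(ℝ^d)` is convex if it lies in some affine chart and is convex there. -/
def IsConvexSet (C : Set (PSp d)) : Prop :=
  ∃ f : (Fin d → ℝ) →ₗ[ℝ] ℝ, (∀ x ∈ C, f x.rep ≠ 0) ∧ Convex ℝ (chartMap f '' C)

/-- A set `C ⊆ ℙ(ℝ^d)` is properly convex if it lies in some affine chart and is
convex and bounded there. -/
def IsProperlyConvexSet (C : Set (PSp d)) : Prop :=
  ∃ f : (Fin d → ℝ) →ₗ[ℝ] ℝ, (∀ x ∈ C, f x.rep ≠ 0) ∧ Convex ℝ (chartMap f '' C) ∧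
    Bornology.IsBounded (chartMap f '' C)

/-- A properly convex domain: a non-empty open properly convex subset of `ℙ(ℝ^d)`. -/
def IsProperlyConvexDomain (Ω : Set (PSp d)) : Prop :=
  IsOpen Ω ∧ Ω.Nonempty ∧ IsProperlyConvexSet Ω

/-- The projectivization of a linear subspace `W ⊆ ℝ^d`, as a subset of `ℙ(ℝ^d)`. -/
def Pb (W : Submodule ℝ (Fin d → ℝ)) : Set (PSp d) := {x | x.rep ∈ W}

/-- The linear span of (the lines representing) a subset of `ℙ(ℝ^d)`. -/
def projSpan (C : Set (PSp d)) : Submodule ℝ (Fin d → ℝ) :=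
  Submodule.span ℝ {v | ∃ x ∈ C, v = Projectivization.rep x}

/-- `C` is open in its span, i.e. equal to its relative interior. -/
def OpenInSpan (C : Set (PSp d)) : Prop :=
  ∃ U : Set (PSp d), IsOpen U ∧ C = U ∩ Pb (projSpan C)

/-! ### The Hilbert metric -/

/-- The set of "cross-ratio" values used to define the Hilbert distance on a properly
convex set `C` which is open in its span: for linear functionals `f, g` which do not
vanish on (the cone over) `C`, one takes `f(ξ)g(η)/(f(η)g(ξ))` where `ξ, η` are
representatives of `x, y`.  (This quantity is independent of the choice of
representatives.)  For such a set `C`, the supremum of this set is exactly the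
cross-ratio `[a,x,y,b]` of the classical definition of the Hilbert distance, where
`a, x, y, b` are aligned in this order on the projective line through `x` and `y`,
with `a, b ∈ ∂C`. -/
def crossSet (C : Set (PSp d)) (x y : PSp d) : Set ℝ :=
  {r | ∃ f g : (Fin d → ℝ) →ₗ[ℝ] ℝ, (∀ z ∈ C, f z.rep ≠ 0) ∧ (∀ z ∈ C, g z.rep ≠ 0) ∧
      r = (f x.rep * g y.rep) / (f y.rep * g x.rep)}

/-- The Hilbert distance on a properly convex set `C ⊆ ℙ(ℝ^d)` which is open in its
span: `H_C(x,y) = (1/2) log [a,x,y,b]`. -/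
noncomputable def hilbertDist (C : Set (PSp d)) (x y : PSp d) : ℝ :=
  (1 / 2) * Real.log (sSup (crossSet C x y))

/-- The distance from a point to a set, for the Hilbert metric on `C`. -/
noncomputable def hilbertDistToSet (C : Set (PSp d)) (x : PSp d) (D : Set (PSp d)) : ℝ :=
  sInf {s | ∃ y ∈ D, s = hilbertDist C x y}

/-- The Hausdorff distance between two subsets of `C`, for the Hilbert metric on `C`. -/
noncomputable def hilbertHausDist (C : Set (PSp d)) (A B : Set (PSp d)) : ℝ :=
  max (sSup {r | ∃ a ∈ A, r = hilbertDistToSet C a B})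
      (sSup {r | ∃ b ∈ B, r = hilbertDistToSet C b A})

/-- The minimal translation length `τ_C(g) = inf_{x ∈ C} H_C(x, gx)`. -/
noncomputable def transLength (C : Set (PSp d)) (g : PGL d) : ℝ :=
  sInf ((fun x => hilbertDist C x (g • x)) '' C)

/-- The minimal translation set `Min(g) = {x ∈ Ω : H_Ω(x,gx) = τ_Ω(g)}`. -/
noncomputable def minSet (Ω : Set (PSp d)) (g : PGL d) : Set (PSp d) :=
  {x ∈ Ω | hilbertDist Ω x (g • x) = transLength Ω g}

/-! ### Automorphisms, cocompact actions -/

/-- The automorphism group `Aut(Ω) = {g ∈ PGL(d,ℝ) : gΩ = Ω}`. -/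
noncomputable def aut (Ω : Set (PSp d)) : Subgroup (PGL d) := MulAction.stabilizer (PGL d) Ω

/-- A collection `G` of elements of `PGL(d,ℝ)` acts co-compactly on `X ⊆ ℙ(ℝ^d)` if
there is a compact `K ⊆ X` with `⋃_{g ∈ G} gK = X`. -/
def ActsCocompactlyOn (G : Set (PGL d)) (X : Set (PSp d)) : Prop :=
  ∃ K : Set (PSp d), K ⊆ X ∧ IsCompact K ∧ (⋃ g ∈ G, g • K) = X

/-- A naive convex co-compact triple `(Ω, 𝒞, Λ)`. -/
structure IsNCCTriple (Ω 𝒞 : Set (PSp d)) (Λ : Subgroup (PGL d)) : Prop where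
  dom : IsProperlyConvexDomain Ω
  lambda_le : Λ ≤ aut Ω
  lambda_inf : (Λ : Set (PGL d)).Infinite
  lambda_disc : DiscreteTopology Λ
  C_nonempty : 𝒞.Nonempty
  C_sub : 𝒞 ⊆ Ω
  C_convex : IsConvexSet 𝒞
  C_closed : closure 𝒞 ∩ Ω ⊆ 𝒞   -- `𝒞` is closed in `Ω`
  C_inv : ∀ γ ∈ Λ, γ • 𝒞 = 𝒞
  C_cocompact : ActsCocompactlyOn (Λ : Set (PGL d)) 𝒞

/-! ### Segments, convex hulls and faces -/

/-- The smallest convex subset of `cl(C)` containing `X` (the convex hull of `X`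
relative to `C`). -/
def convHull (C : Set (PSp d)) (X : Set (PSp d)) : Set (PSp d) :=
  ⋂₀ {D | IsConvexSet D ∧ D ⊆ closure C ∧ X ⊆ D}

/-- The closed segment `[x,y]` joining two points of `cl(C)` inside `cl(C)`. -/
def closedSeg (C : Set (PSp d)) (x y : PSp d) : Set (PSp d) := convHull C {x, y}

/-- The open segment `(x,y) = [x,y] \ {x,y}`. -/
def openSeg (C : Set (PSp d)) (x y : PSp d) : Set (PSp d) := closedSeg C x y \ {x, y}

/-- The open segment with endpoints `[u]` and `[v]` (for `u, v` linearly independent):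
the projective points `[a•u + b•v]` with `a, b > 0`. -/
def openSegV (u v : Fin d → ℝ) : Set (PSp d) :=
  {z | ∃ a b : ℝ, 0 < a ∧ 0 < b ∧ ∃ h : a • u + b • v ≠ 0, z = Projectivization.mk ℝ (a • u + b • v) h}

/-- The projective line through `[u]` and `[v]`. -/
def projLine (u v : Fin d → ℝ) : Set (PSp d) :=
  {z | ∃ a b : ℝ, ∃ h : a • u + b • v ≠ 0, z = Projectivization.mk ℝ (a • u + b • v) h}

/-- The open face `F_Ω(x)` of a point `x ∈ cl(Ω)`. -/
def face (Ω : Set (PSp d)) (x : PSp d) : Set (PSp d) :=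
  insert x {y ∈ closure Ω | ∃ u v : Fin d → ℝ,
    openSegV u v ⊆ closure Ω ∧ x ∈ openSegV u v ∧ y ∈ openSegV u v}

/-- `A` is properly embedded in `B` if `A ⊆ B` and the inclusion is a proper map. -/
def ProperlyEmbedded (A B : Set (PSp d)) : Prop :=
  ∃ h : A ⊆ B, IsProperMap (Set.inclusion h)

/-! ### Simplices -/

/-- The standard open `(k-1)`-dimensional simplex
`{[x₁ : ⋯ : x_k : 0 : ⋯ : 0] : x₁ > 0, …, x_k > 0} ⊆ ℙ(ℝ^d)`. -/
def stdSimplex (d k : ℕ) : Set (PSp d) :=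
  {x | ∃ (v : Fin d → ℝ) (h : v ≠ 0), x = Projectivization.mk ℝ v h ∧
    ∀ i : Fin d, (((i : ℕ) < k → 0 < v i) ∧ (k ≤ (i : ℕ) → v i = 0))}

/-- The `i`-th standard basis point `[e_i] ∈ ℙ(ℝ^d)`. -/
noncomputable def basisPt (d : ℕ) (i : Fin d) : PSp d :=
  Projectivization.mk ℝ (Pi.single i 1) (by
    intro h
    have := congrFun h i
    simp at this)

/-- The absolute values of the complex eigenvalues of a real matrix. -/
noncomputable def eigAbs (M : Matrix (Fin d) (Fin d) ℝ) : Set ℝ :=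
  (fun z : ℂ => ‖z‖) '' spectrum ℂ (M.map Complex.ofReal)

/-- The operator norm on `End(ℝ^d)` associated to the standard Euclidean norm. -/
noncomputable def eucOpNorm (M : Matrix (Fin d) (Fin d) ℝ) : ℝ :=
  ‖Matrix.toEuclideanCLM (𝕜 := ℝ) M‖

/-- The image of a subset of `ℙ(ℝ^d)` under (the projectivization of) an endomorphism
`T` of `ℝ^d`. -/
def projImage (T : Matrix (Fin d) (Fin d) ℝ) (A : Set (PSp d)) : Set (PSp d) :=
  {y | ∃ (v : Fin d → ℝ) (hv : v ≠ 0), Projectivization.mk ℝ v hv ∈ A ∧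
    ∃ hTv : T *ᵥ v ≠ 0, y = Projectivization.mk ℝ (T *ᵥ v) hTv}


/-!
Lift to the cone `C ⊆ ℝ^d` over `Ω` and write `M(x/y)` for the supremum of `φ x / φ y` over
functionals `φ` positive on `C`; the Hilbert cross-ratio of `[x], [y]` is `M(x/y) * M(y/x)`, and
each `a_j` lifts to a linear map `τ` preserving `C`. If `p = ∑ wᵢ xᵢ` with `[xᵢ] ∈ M_r`, the
mediant inequality gives `M(p/τp) ≤ M(xᵢ/τxᵢ)` and `M(τp/p) ≤ M(τxⱼ/xⱼ)` for suitable `i, j`, while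
`M(τxᵢ/xᵢ) * M(xⱼ/τxⱼ) ≥ 1` for any two points of `C`. Multiplying, the cross-ratio of `p, τp` is
at most the product of those of `xᵢ, τxᵢ` and `xⱼ, τxⱼ`, so `H_Ω(p, a_j p) ≤ 2r ≤ 2^(d-1) r`
(for `d ≤ 1`, `ℙ(ℝ^d)` has at most one point).
-/

section Cone

variable {E : Type*} [AddCommGroup E] [Module ℝ E] {C : Set E}

def posDual (C : Set E) : Set (E →ₗ[ℝ] ℝ) := {φ | ∀ u ∈ C, 0 < φ u}

/-- Birkhoff's `M(x/y)`; for an open cone, `log (M(x/y) * M(y/x))` is Hilbert's projective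
metric (see `sSup_crossSet_mk`). -/
noncomputable def maxRatio (C : Set E) (x y : E) : ℝ := ⨆ φ : posDual C, φ.1 x / φ.1 y

noncomputable def coneCrossRatio (C : Set E) (x y : E) : ℝ := maxRatio C x y * maxRatio C y x

lemma comp_mem_posDual {φ : E →ₗ[ℝ] ℝ} (hφ : φ ∈ posDual C) {f : E →ₗ[ℝ] E}
    (hf : Set.MapsTo f C C) : φ ∘ₗ f ∈ posDual C :=
  fun _ hu => hφ _ (hf hu)

lemma maxRatio_nonneg {x y : E} (hx : x ∈ C) (hy : y ∈ C) : 0 ≤ maxRatio C x y :=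
  Real.iSup_nonneg fun φ => (div_pos (φ.2 x hx) (φ.2 y hy)).le

lemma maxRatio_le {x y : E} (hy : y ∈ C) {B : ℝ} (hB : 0 ≤ B)
    (h : ∀ φ ∈ posDual C, φ x ≤ B * φ y) : maxRatio C x y ≤ B :=
  Real.iSup_le (fun φ => div_le_of_le_mul₀ (φ.2 y hy).le hB (h φ.1 φ.2)) hB

lemma coneCrossRatio_le {x y : E} (hx : x ∈ C) (hy : y ∈ C) {K : ℝ} (hK : 0 ≤ K)
    (h : ∀ φ ∈ posDual C, ∀ ψ ∈ posDual C, φ x / φ y * (ψ y / ψ x) ≤ K) :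
    coneCrossRatio C x y ≤ K := by
  rw [coneCrossRatio, maxRatio, Real.iSup_mul_of_nonneg (maxRatio_nonneg hy hx)]
  refine Real.iSup_le (fun φ => ?_) hK
  rw [maxRatio, Real.mul_iSup_of_nonneg (div_pos (φ.2 x hx) (φ.2 y hy)).le]
  exact Real.iSup_le (fun ψ => h φ.1 φ.2 ψ.1 ψ.2) hK

variable [TopologicalSpace E] [IsTopologicalAddGroup E] [ContinuousSMul ℝ E]

lemma exists_pos_sub_smul_mem (hC : IsOpen C) {y : E} (hy : y ∈ C) (x : E) :
    ∃ t : ℝ, 0 < t ∧ y - t • x ∈ C := by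
  have hcont : Continuous fun t : ℝ => y - t • x := by fun_prop
  have h : ∀ᶠ t in nhdsWithin (0 : ℝ) (Set.Ioi 0), y - t • x ∈ C :=
    nhdsWithin_le_nhds ((hcont.tendsto' 0 y (by simp)).eventually (hC.mem_nhds hy))
  exact (h.and self_mem_nhdsWithin).exists.imp fun t ht => ⟨ht.2, ht.1⟩

lemma bddAbove_range_ratio (hC : IsOpen C) {y : E} (hy : y ∈ C) (x : E) :
    BddAbove (Set.range fun φ : posDual C => φ.1 x / φ.1 y) := by
  obtain ⟨t, ht, hyx⟩ := exists_pos_sub_smul_mem hC hy x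
  refine ⟨t⁻¹, ?_⟩
  rintro _ ⟨⟨φ, hφ⟩, rfl⟩
  have h := hφ _ hyx
  rw [map_sub, map_smul, smul_eq_mul, sub_pos] at h
  rw [div_le_iff₀ (hφ y hy), ← div_eq_inv_mul, le_div_iff₀ ht]
  linarith

lemma apply_le_maxRatio_mul (hC : IsOpen C) {y : E} (hy : y ∈ C) (x : E)
    {φ : E →ₗ[ℝ] ℝ} (hφ : φ ∈ posDual C) : φ x ≤ maxRatio C x y * φ y :=
  (div_le_iff₀ (hφ y hy)).1 (le_ciSup (bddAbove_range_ratio hC hy x) ⟨φ, hφ⟩)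

lemma one_le_coneCrossRatio (hC : IsOpen C) {φ₀ : E →ₗ[ℝ] ℝ} (hφ₀ : φ₀ ∈ posDual C)
    {x y : E} (hx : x ∈ C) (hy : y ∈ C) : 1 ≤ coneCrossRatio C x y := by
  refine le_of_mul_le_mul_right ?_ (hφ₀ x hx)
  calc 1 * φ₀ x = φ₀ x := one_mul _
    _ ≤ maxRatio C x y * φ₀ y := apply_le_maxRatio_mul hC hy x hφ₀
    _ ≤ maxRatio C x y * (maxRatio C y x * φ₀ x) :=
        mul_le_mul_of_nonneg_left (apply_le_maxRatio_mul hC hx y hφ₀) (maxRatio_nonneg hx hy)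
    _ = coneCrossRatio C x y * φ₀ x := (mul_assoc _ _ _).symm

lemma maxRatio_sum_le (hC : IsOpen C) {ι : Type*} [Fintype ι] {w : ι → ℝ} (hw : ∀ i, 0 ≤ w i)
    (x : ι → E) {y : ι → E} (hy : ∀ i, y i ∈ C) (hyC : ∑ i, w i • y i ∈ C) {B : ℝ} (hB : 0 ≤ B)
    (h : ∀ i, maxRatio C (x i) (y i) ≤ B) :
    maxRatio C (∑ i, w i • x i) (∑ i, w i • y i) ≤ B := by
  refine maxRatio_le hyC hB fun φ hφ => ?_
  simp only [map_sum, map_smul, smul_eq_mul, Finset.mul_sum]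
  refine Finset.sum_le_sum fun i _ => ?_
  calc w i * φ (x i) ≤ w i * (B * φ (y i)) :=
        mul_le_mul_of_nonneg_left ((apply_le_maxRatio_mul hC (hy i) _ hφ).trans
          (mul_le_mul_of_nonneg_right (h i) (hφ _ (hy i)).le)) (hw i)
    _ = B * (w i * φ (y i)) := mul_left_comm _ _ _

lemma apply_pow_le (hC : IsOpen C) {τ : E →ₗ[ℝ] E} (hτ : Set.MapsTo τ C C) {x : E}
    (hx : x ∈ C) {φ : E →ₗ[ℝ] ℝ} (hφ : φ ∈ posDual C) (n : ℕ) :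
    φ ((τ ^ n) x) ≤ maxRatio C (τ x) x ^ n * φ x := by
  induction n generalizing φ with
  | zero => simp
  | succ n ih =>
    calc φ ((τ ^ (n + 1)) x) = (φ ∘ₗ τ) ((τ ^ n) x) := by
          rw [pow_succ', Module.End.mul_apply, LinearMap.comp_apply]
      _ ≤ maxRatio C (τ x) x ^ n * φ (τ x) := ih (comp_mem_posDual hφ hτ)
      _ ≤ maxRatio C (τ x) x ^ n * (maxRatio C (τ x) x * φ x) :=
          mul_le_mul_of_nonneg_left (apply_le_maxRatio_mul hC hx _ hφ)
            (pow_nonneg (maxRatio_nonneg (hτ hx) hx) n)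
      _ = maxRatio C (τ x) x ^ (n + 1) * φ x := by ring

lemma apply_le_pow_mul (hC : IsOpen C) {τ : E →ₗ[ℝ] E} (hτ : Set.MapsTo τ C C) {y : E}
    (hy : y ∈ C) {φ : E →ₗ[ℝ] ℝ} (hφ : φ ∈ posDual C) (n : ℕ) :
    φ y ≤ maxRatio C y (τ y) ^ n * φ ((τ ^ n) y) := by
  induction n generalizing φ with
  | zero => simp
  | succ n ih =>
    calc φ y ≤ maxRatio C y (τ y) * (φ ∘ₗ τ) y := apply_le_maxRatio_mul hC (hτ hy) _ hφ
      _ ≤ maxRatio C y (τ y) * (maxRatio C y (τ y) ^ n * (φ ∘ₗ τ) ((τ ^ n) y)) :=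
          mul_le_mul_of_nonneg_left (ih (comp_mem_posDual hφ hτ)) (maxRatio_nonneg hy (hτ hy))
      _ = maxRatio C y (τ y) ^ (n + 1) * φ ((τ ^ (n + 1)) y) := by
          rw [pow_succ' τ, Module.End.mul_apply, LinearMap.comp_apply]; ring

lemma one_le_maxRatio_mul_maxRatio (hC : IsOpen C) {τ : E →ₗ[ℝ] E} (hτ : Set.MapsTo τ C C)
    {φ₀ : E →ₗ[ℝ] ℝ} (hφ₀ : φ₀ ∈ posDual C) {x y : E} (hx : x ∈ C) (hy : y ∈ C) :
    1 ≤ maxRatio C (τ x) x * maxRatio C y (τ y) := by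
  set s := maxRatio C (τ x) x
  set t := maxRatio C y (τ y)
  obtain ⟨c, hc, hyx⟩ := exists_pos_sub_smul_mem hC hy x
  obtain ⟨c', hc', hxy⟩ := exists_pos_sub_smul_mem hC hx y
  -- `c • x ≤ y` and `c' • y ≤ x` in the order of `C`; iterating `τ` squeezes them unless
  -- `1 ≤ s * t`
  have hbound (n : ℕ) : c * c' ≤ (s * t) ^ n := by
    have hτn : Set.MapsTo (τ ^ n) C C := Module.End.coe_pow τ n ▸ hτ.iterate n
    have h₁ := hφ₀ _ hyx
    have h₂ := comp_mem_posDual hφ₀ hτn _ hxy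
    simp only [map_sub, map_smul, smul_eq_mul, LinearMap.comp_apply, sub_pos] at h₁ h₂
    have h₃ := apply_pow_le hC hτ hx hφ₀ n
    have h₄ := apply_le_pow_mul hC hτ hy hφ₀ n
    have ht : 0 ≤ t ^ n := pow_nonneg (maxRatio_nonneg hy (hτ hy)) n
    have hx₀ := hφ₀ x hx
    refine le_of_mul_le_mul_right ?_ hx₀
    calc c * c' * φ₀ x ≤ c' * φ₀ y := by nlinarith
      _ ≤ c' * (t ^ n * φ₀ ((τ ^ n) y)) := by gcongr
      _ ≤ t ^ n * φ₀ ((τ ^ n) x) := by nlinarith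
      _ ≤ t ^ n * (s ^ n * φ₀ x) := by gcongr
      _ = (s * t) ^ n * φ₀ x := by ring
  by_contra! h
  obtain ⟨n, hn⟩ := exists_pow_lt_of_lt_one (mul_pos hc hc') h
  exact (hbound n).not_gt hn

theorem coneCrossRatio_sum_le (hC : IsOpen C) {τ : E →ₗ[ℝ] E} (hτ : Set.MapsTo τ C C)
    {φ₀ : E →ₗ[ℝ] ℝ} (hφ₀ : φ₀ ∈ posDual C) {ι : Type*} [Fintype ι] [Nonempty ι]
    {w : ι → ℝ} (hw : ∀ i, 0 ≤ w i) {x : ι → E} (hx : ∀ i, x i ∈ C)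
    (hp : ∑ i, w i • x i ∈ C) {K : ℝ} (hK : ∀ i, coneCrossRatio C (x i) (τ (x i)) ≤ K) :
    coneCrossRatio C (∑ i, w i • x i) (τ (∑ i, w i • x i)) ≤ K ^ 2 := by
  set l : ι → ℝ := fun i => maxRatio C (x i) (τ (x i))
  set u : ι → ℝ := fun i => maxRatio C (τ (x i)) (x i)
  obtain ⟨i₀, hi₀⟩ := Finite.exists_max l
  obtain ⟨j₀, hj₀⟩ := Finite.exists_max u
  have hτp : τ (∑ i, w i • x i) = ∑ i, w i • τ (x i) := by simp only [map_sum, map_smul]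
  have hl : maxRatio C (∑ i, w i • x i) (τ (∑ i, w i • x i)) ≤ l i₀ := by
    rw [hτp]
    exact maxRatio_sum_le hC hw x (fun i => hτ (hx i)) (hτp ▸ hτ hp)
      (maxRatio_nonneg (hx i₀) (hτ (hx i₀))) hi₀
  have hu : maxRatio C (τ (∑ i, w i • x i)) (∑ i, w i • x i) ≤ u j₀ := by
    rw [hτp]
    exact maxRatio_sum_le hC hw _ hx hp (maxRatio_nonneg (hτ (hx j₀)) (hx j₀)) hj₀
  have hl₀ (i : ι) : 0 ≤ l i := maxRatio_nonneg (hx i) (hτ (hx i))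
  have hu₀ (i : ι) : 0 ≤ u i := maxRatio_nonneg (hτ (hx i)) (hx i)
  have hK₀ : 0 ≤ K := (mul_nonneg (hl₀ i₀) (hu₀ i₀)).trans (hK i₀)
  calc coneCrossRatio C (∑ i, w i • x i) (τ (∑ i, w i • x i))
      ≤ l i₀ * u j₀ := mul_le_mul hl hu (maxRatio_nonneg (hτ hp) hp) (hl₀ i₀)
    _ ≤ l i₀ * u j₀ * (u i₀ * l j₀) :=
        le_mul_of_one_le_right (mul_nonneg (hl₀ i₀) (hu₀ j₀))
          (one_le_maxRatio_mul_maxRatio hC hτ hφ₀ (hx i₀) (hx j₀))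
    _ = coneCrossRatio C (x i₀) (τ (x i₀)) * coneCrossRatio C (x j₀) (τ (x j₀)) := by
        simp only [coneCrossRatio, l, u]; ring
    _ ≤ K ^ 2 := by
        rw [sq]
        exact mul_le_mul (hK i₀) (hK j₀) (mul_nonneg (hl₀ j₀) (hu₀ j₀)) hK₀

variable [FiniteDimensional ℝ E] [T2Space E]

lemma smul_mem_posDual (hC : Convex ℝ C) {G : E →ₗ[ℝ] ℝ} (hG : ∀ u ∈ C, G u ≠ 0) {u₀ : E}
    (hu₀ : u₀ ∈ C) : G u₀ • G ∈ posDual C := by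
  intro u hu
  by_contra! h
  have hcont : ContinuousOn (fun v => G u₀ * G v) C :=
    (continuous_const.mul G.continuous_of_finiteDimensional).continuousOn
  obtain ⟨v, hv, hGv⟩ := hC.isPreconnected.intermediate_value₂ hu₀ hu continuousOn_const hcont
    (mul_self_nonneg (G u₀)) h
  exact mul_ne_zero (hG u₀ hu₀) (hG v hv) hGv.symm

end Cone

section Projectivization

variable {K V : Type*} [Field K] [AddCommGroup V] [Module K V]

lemma subsingleton_of_finrank_le_one [FiniteDimensional K V] (h : Module.finrank K V ≤ 1) :
    Subsingleton (ℙ K V) := by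
  have htop (x : ℙ K V) : x.submodule = ⊤ := by
    apply Submodule.eq_top_of_finrank_eq
    have := x.submodule.finrank_le
    rw [x.finrank_submodule] at this ⊢
    omega
  exact ⟨fun x y => Projectivization.submodule_injective ((htop x).trans (htop y).symm)⟩

lemma mk_smul_eq {c : K} (hc : c ≠ 0) {v : V} (hv : v ≠ 0) :
    mk K (c • v) (smul_ne_zero hc hv) = mk K v hv :=
  (mk_eq_mk_iff' K _ _ _ hv).2 ⟨c, rfl⟩

lemma apply_mk_rep_ne_zero_iff {F : V →ₗ[K] K} {v : V} (hv : v ≠ 0) :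
    F (mk K v hv).rep ≠ 0 ↔ F v ≠ 0 := by
  obtain ⟨a, ha⟩ := exists_smul_eq_mk_rep K v hv
  rw [← ha, Units.smul_def, map_smul, smul_eq_mul]
  exact ⟨fun h => right_ne_zero_of_mul h, mul_ne_zero a.ne_zero⟩

end Projectivization

section Chart

variable {d : ℕ} {f₀ : (Fin d → ℝ) →ₗ[ℝ] ℝ} {Ω : Set (PSp d)}

lemma chartMap_mk {v : Fin d → ℝ} (hv : v ≠ 0) : chartMap f₀ (mk ℝ v hv) = (f₀ v)⁻¹ • v := by
  obtain ⟨a, ha⟩ := exists_smul_eq_mk_rep ℝ v hv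
  rw [chartMap, ← ha, Units.smul_def, map_smul, smul_eq_mul, smul_smul]
  rcases eq_or_ne (f₀ v) 0 with h | h
  · simp [h]
  · field_simp

lemma mk_chartMap {x : PSp d} (h : chartMap f₀ x ≠ 0) : mk ℝ (chartMap f₀ x) h = x := by
  have hx : f₀ x.rep ≠ 0 := fun h₀ => h (by simp [chartMap, h₀])
  exact (mk_smul_eq (inv_ne_zero hx) x.rep_nonzero).trans (mk_rep x)

def chartCone (f₀ : (Fin d → ℝ) →ₗ[ℝ] ℝ) (Ω : Set (PSp d)) : Set (Fin d → ℝ) :=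
  {w | 0 < f₀ w ∧ ∃ h : w ≠ 0, mk ℝ w h ∈ Ω}

lemma ne_zero_of_mem_chartCone {w : Fin d → ℝ} (hw : w ∈ chartCone f₀ Ω) : w ≠ 0 := hw.2.1

lemma mk_mem_of_mem_chartCone {w : Fin d → ℝ} (hw : w ∈ chartCone f₀ Ω) :
    mk ℝ w (ne_zero_of_mem_chartCone hw) ∈ Ω := hw.2.2

lemma mem_posDual_chartCone : f₀ ∈ posDual (chartCone f₀ Ω) := fun _ hw => hw.1

lemma apply_chartMap {x : PSp d} (hx : f₀ x.rep ≠ 0) : f₀ (chartMap f₀ x) = 1 := by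
  rw [chartMap, map_smul, smul_eq_mul, inv_mul_cancel₀ hx]

lemma chartMap_mem_chartCone (hf₀ : ∀ x ∈ Ω, f₀ x.rep ≠ 0) {x : PSp d} (hx : x ∈ Ω) :
    chartMap f₀ x ∈ chartCone f₀ Ω := by
  have h₁ := apply_chartMap (hf₀ x hx)
  have h₀ : chartMap f₀ x ≠ 0 := fun h => by simp [h] at h₁
  exact ⟨h₁ ▸ one_pos, h₀, (mk_chartMap h₀).symm ▸ hx⟩

lemma isOpen_chartCone (hΩ : IsOpen Ω) : IsOpen (chartCone f₀ Ω) := by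
  have hmk : Continuous fun v : {v : Fin d → ℝ // v ≠ 0} => (mk ℝ v.1 v.2 : PSp d) :=
    continuous_quotient_mk'
  have hlift : IsOpen {w : Fin d → ℝ | ∃ h : w ≠ 0, mk ℝ w h ∈ Ω} := by
    convert isOpen_ne.isOpenMap_subtype_val _ (hΩ.preimage hmk) using 1
    ext w
    simp
  exact (isOpen_lt continuous_const f₀.continuous_of_finiteDimensional).inter hlift

lemma convex_chartCone (hf₀ : ∀ x ∈ Ω, f₀ x.rep ≠ 0) (hch : Convex ℝ (chartMap f₀ '' Ω)) :
    Convex ℝ (chartCone f₀ Ω) := by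
  suffices chartCone f₀ Ω = ConvexCone.hull ℝ (chartMap f₀ '' Ω) from this ▸ ConvexCone.convex _
  ext w
  rw [SetLike.mem_coe, ConvexCone.mem_hull_of_convex hch]
  constructor
  · rintro ⟨hw, hw₀, hwΩ⟩
    refine ⟨f₀ w, hw, (f₀ w)⁻¹ • w, ⟨_, hwΩ, chartMap_mk hw₀⟩, ?_⟩
    simp [smul_smul, hw.ne']
  · rintro ⟨c, hc, _, ⟨x, hx, rfl⟩, rfl⟩
    have h₁ := apply_chartMap (hf₀ x hx)
    have h₀ : chartMap f₀ x ≠ 0 := fun h => by simp [h] at h₁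
    refine ⟨by simpa [h₁] using hc, smul_ne_zero hc.ne' h₀, ?_⟩
    rwa [mk_smul_eq hc.ne' h₀, mk_chartMap]

lemma eq_of_chartMap_eq {x y : PSp d} (h : chartMap f₀ x = chartMap f₀ y)
    (hy : chartMap f₀ y ≠ 0) : x = y :=
  calc x = mk ℝ (chartMap f₀ x) (h ▸ hy) := (mk_chartMap _).symm
    _ = mk ℝ (chartMap f₀ y) hy := by congr 1
    _ = y := mk_chartMap hy

lemma forall_apply_rep_ne_zero_iff (hf₀ : ∀ x ∈ Ω, f₀ x.rep ≠ 0) {F : (Fin d → ℝ) →ₗ[ℝ] ℝ} :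
    (∀ z ∈ Ω, F z.rep ≠ 0) ↔ ∀ w ∈ chartCone f₀ Ω, F w ≠ 0 := by
  refine ⟨fun h w hw => (apply_mk_rep_ne_zero_iff _).1 (h _ (mk_mem_of_mem_chartCone hw)),
    fun h z hz => ?_⟩
  have hc := chartMap_mem_chartCone hf₀ hz
  have := (apply_mk_rep_ne_zero_iff (ne_zero_of_mem_chartCone hc)).2 (h _ hc)
  rwa [mk_chartMap] at this

lemma crossSet_mk {v w : Fin d → ℝ} (hv : v ≠ 0) (hw : w ≠ 0) :
    crossSet Ω (mk ℝ v hv) (mk ℝ w hw) = {r | ∃ F G : (Fin d → ℝ) →ₗ[ℝ] ℝ,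
      (∀ z ∈ Ω, F z.rep ≠ 0) ∧ (∀ z ∈ Ω, G z.rep ≠ 0) ∧ r = F v * G w / (F w * G v)} := by
  obtain ⟨a, ha⟩ := exists_smul_eq_mk_rep ℝ v hv
  obtain ⟨b, hb⟩ := exists_smul_eq_mk_rep ℝ w hw
  have key (F G : (Fin d → ℝ) →ₗ[ℝ] ℝ) :
      F (a • v) * G (b • w) / (F (b • w) * G (a • v)) = F v * G w / (F w * G v) := by
    simp only [Units.smul_def, map_smul, smul_eq_mul]
    rw [show (a : ℝ) * F v * (b * G w) = a * b * (F v * G w) by ring,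
      show (b : ℝ) * F w * (a * G v) = a * b * (F w * G v) by ring,
      mul_div_mul_left _ _ (mul_ne_zero a.ne_zero b.ne_zero)]
  simp only [crossSet, ← ha, ← hb, key]

lemma sSup_crossSet_mk (hΩ : IsOpen Ω) (hf₀ : ∀ x ∈ Ω, f₀ x.rep ≠ 0)
    (hch : Convex ℝ (chartMap f₀ '' Ω)) {v w : Fin d → ℝ} (hv : v ∈ chartCone f₀ Ω)
    (hw : w ∈ chartCone f₀ Ω) :
    sSup (crossSet Ω (mk ℝ v (ne_zero_of_mem_chartCone hv))
      (mk ℝ w (ne_zero_of_mem_chartCone hw))) = coneCrossRatio (chartCone f₀ Ω) v w := by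
  have hC := isOpen_chartCone (f₀ := f₀) hΩ
  rw [crossSet_mk]
  simp only [forall_apply_rep_ne_zero_iff hf₀]
  set S := {r | ∃ F G : (Fin d → ℝ) →ₗ[ℝ] ℝ, (∀ u ∈ chartCone f₀ Ω, F u ≠ 0) ∧
    (∀ u ∈ chartCone f₀ Ω, G u ≠ 0) ∧ r = F v * G w / (F w * G v)}
  have hle : ∀ r ∈ S, r ≤ coneCrossRatio (chartCone f₀ Ω) v w := by
    rintro _ ⟨F, G, hF, hG, rfl⟩
    have hF' := smul_mem_posDual (convex_chartCone hf₀ hch) hF hv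
    have hG' := smul_mem_posDual (convex_chartCone hf₀ hch) hG hv
    have e : F v * G w / (F w * G v)
        = (F v • F) v / (F v • F) w * ((G v • G) w / (G v • G) v) := by
      simp only [LinearMap.smul_apply, smul_eq_mul, mul_div_mul_left _ _ (hF v hv),
        mul_div_mul_left _ _ (hG v hv), div_mul_div_comm]
    rw [e]
    exact mul_le_mul (le_ciSup (bddAbove_range_ratio hC hw v) ⟨_, hF'⟩)
      (le_ciSup (bddAbove_range_ratio hC hv w) ⟨_, hG'⟩) (div_pos (hG' w hw) (hG' v hv)).le
      (maxRatio_nonneg hv hw)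
  have hone : 1 ∈ S := ⟨f₀, f₀, fun u hu => hu.1.ne', fun u hu => hu.1.ne', by
    rw [mul_comm (f₀ w), div_self (mul_ne_zero hv.1.ne' hw.1.ne')]⟩
  refine le_antisymm (csSup_le ⟨1, hone⟩ hle) (coneCrossRatio_le hv hw
    (zero_le_one.trans (le_csSup ⟨_, hle⟩ hone)) fun φ hφ ψ hψ => le_csSup ⟨_, hle⟩ ?_)
  exact ⟨φ, ψ, fun u hu => (hφ u hu).ne', fun u hu => (hψ u hu).ne', div_mul_div_comm _ _ _ _⟩

lemma smul_mk (A : GL (Fin d) ℝ) {v : Fin d → ℝ} (hv : v ≠ 0) :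
    (QuotientGroup.mk A : PGL d) • mk ℝ v hv
      = mk ℝ (glEquivHom d A v) ((glEquivHom d A).map_ne_zero_iff.2 hv) := rfl

lemma exists_linearMap_lift (hf₀ : ∀ x ∈ Ω, f₀ x.rep ≠ 0) (hch : Convex ℝ (chartMap f₀ '' Ω))
    (hΩne : Ω.Nonempty) {g : PGL d} (hg : g ∈ aut Ω) :
    ∃ τ : (Fin d → ℝ) →ₗ[ℝ] (Fin d → ℝ), Set.MapsTo τ (chartCone f₀ Ω) (chartCone f₀ Ω) ∧
      ∀ v (hv : v ≠ 0) (hτv : τ v ≠ 0), mk ℝ (τ v) hτv = g • mk ℝ v hv := by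
  obtain ⟨A, rfl⟩ := QuotientGroup.mk_surjective g
  set e := glEquivHom d A
  have hgΩ {v : Fin d → ℝ} (hv : v ≠ 0) (h : mk ℝ v hv ∈ Ω) :
      mk ℝ (e v) (e.map_ne_zero_iff.2 hv) ∈ Ω := by
    rw [← smul_mk A hv, ← MulAction.mem_stabilizer_iff.1 hg]
    exact Set.smul_mem_smul_set h
  have hG (u : Fin d → ℝ) (hu : u ∈ chartCone f₀ Ω) : (f₀ ∘ₗ e.toLinearMap) u ≠ 0 :=
    (apply_mk_rep_ne_zero_iff (F := f₀) _).1 (hf₀ _ (hgΩ _ (mk_mem_of_mem_chartCone hu)))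
  obtain ⟨x₀, hx₀⟩ := hΩne
  have hu₀ := chartMap_mem_chartCone hf₀ hx₀
  have hpos := smul_mem_posDual (convex_chartCone hf₀ hch) hG hu₀
  set c := (f₀ ∘ₗ e.toLinearMap) (chartMap f₀ x₀)
  have hmk (v : Fin d → ℝ) (hv : v ≠ 0) (hτv : (c • e.toLinearMap) v ≠ 0) :
      mk ℝ ((c • e.toLinearMap) v) hτv = (QuotientGroup.mk A : PGL d) • mk ℝ v hv :=
    (mk_smul_eq (hG _ hu₀) _).trans (smul_mk A hv).symm
  refine ⟨c • e.toLinearMap, fun u hu => ?_, hmk⟩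
  have hτu : 0 < f₀ ((c • e.toLinearMap) u) := by simpa using hpos u hu
  have hτu₀ : (c • e.toLinearMap) u ≠ 0 := fun h => by simp [h] at hτu
  refine ⟨hτu, hτu₀, ?_⟩
  rw [hmk u (ne_zero_of_mem_chartCone hu) hτu₀, smul_mk]
  exact hgΩ _ (mk_mem_of_mem_chartCone hu)

lemma hilbertDist_smul_le_iff (hΩ : IsOpen Ω) (hf₀ : ∀ x ∈ Ω, f₀ x.rep ≠ 0)
    (hch : Convex ℝ (chartMap f₀ '' Ω)) {g : PGL d} {τ : (Fin d → ℝ) →ₗ[ℝ] (Fin d → ℝ)}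
    (hτ : Set.MapsTo τ (chartCone f₀ Ω) (chartCone f₀ Ω))
    (hτg : ∀ v (hv : v ≠ 0) (hτv : τ v ≠ 0), mk ℝ (τ v) hτv = g • mk ℝ v hv)
    {x : PSp d} (hx : x ∈ Ω) {s : ℝ} :
    hilbertDist Ω x (g • x) ≤ s ↔
      coneCrossRatio (chartCone f₀ Ω) (chartMap f₀ x) (τ (chartMap f₀ x)) ≤ Real.exp (2 * s) := by
  have hv := chartMap_mem_chartCone hf₀ hx
  have hdist : hilbertDist Ω x (g • x) = 1 / 2 *
      Real.log (coneCrossRatio (chartCone f₀ Ω) (chartMap f₀ x) (τ (chartMap f₀ x))) := by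
    rw [← sSup_crossSet_mk hΩ hf₀ hch hv (hτ hv), hτg _ (ne_zero_of_mem_chartCone hv),
      mk_chartMap, hilbertDist]
  have hpos := one_le_coneCrossRatio (isOpen_chartCone hΩ) mem_posDual_chartCone hv (hτ hv)
  rw [hdist, ← Real.log_le_iff_le_exp (zero_lt_one.trans_le hpos)]
  constructor <;> intro h <;> linarith

lemma chartMap_mem_convexHull (hf₀ : ∀ x ∈ Ω, f₀ x.rep ≠ 0) (hch : Convex ℝ (chartMap f₀ '' Ω))
    {X : Set (PSp d)} (hX : X ⊆ Ω) {p : PSp d} (hp : p ∈ convHull Ω X) :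
    chartMap f₀ p ∈ convexHull ℝ (chartMap f₀ '' X) := by
  have hSΩ : convexHull ℝ (chartMap f₀ '' X) ⊆ chartMap f₀ '' Ω :=
    convexHull_min (Set.image_mono hX) hch
  have hD : {x | chartMap f₀ x ∈ convexHull ℝ (chartMap f₀ '' X)} ⊆ Ω := by
    intro x hx
    obtain ⟨z, hz, hzx⟩ := hSΩ hx
    rwa [eq_of_chartMap_eq hzx.symm (ne_zero_of_mem_chartCone (chartMap_mem_chartCone hf₀ hz))]
  have hchart : chartMap f₀ '' {x | chartMap f₀ x ∈ convexHull ℝ (chartMap f₀ '' X)}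
      = convexHull ℝ (chartMap f₀ '' X) := by
    refine (Set.image_preimage_subset _ _).antisymm fun v hv => ?_
    obtain ⟨z, -, rfl⟩ := hSΩ hv
    exact ⟨z, hv, rfl⟩
  refine hp _ ⟨⟨f₀, fun x hx => hf₀ x (hD hx), ?_⟩, hD.trans subset_closure,
    fun x hx => subset_convexHull ℝ _ ⟨x, hx, rfl⟩⟩
  rw [hchart]
  exact convex_convexHull ℝ _

end Chart

theorem convHull_Mr_subset_general {d : ℕ} (Ω 𝒞 : Set (PSp d))
    (hΩ : IsProperlyConvexDomain Ω)
    (h𝒞Ω : 𝒞 ⊆ Ω) (h𝒞conv : IsConvexSet 𝒞)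
    (m : ℕ) (a : Fin m → PGL d) (ha : ∀ j, a j ∈ aut Ω) (r : ℝ) (hr : 0 < r) :
    convHull Ω {x ∈ 𝒞 | ∀ j, hilbertDist Ω x (a j • x) ≤ r}
      ⊆ {x ∈ 𝒞 | ∀ j, hilbertDist Ω x (a j • x) ≤ 2 ^ (d - 1) * r} := by
  obtain ⟨hΩo, hΩne, f₀, hf₀, hch, -⟩ := hΩ
  intro p hp
  have hp𝒞 : p ∈ 𝒞 := hp 𝒞 ⟨h𝒞conv, h𝒞Ω.trans subset_closure, fun x hx => hx.1⟩
  have hpΩ : p ∈ Ω := h𝒞Ω hp𝒞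
  refine ⟨hp𝒞, fun j => ?_⟩
  obtain ⟨ι, _, w, z, hw, hw₁, hz, hpz⟩ := mem_convexHull_iff_exists_fintype.1
    (chartMap_mem_convexHull hf₀ hch (fun x hx => h𝒞Ω hx.1) hp)
  choose x hxM hxz using hz
  have : Nonempty ι :=
    Finset.univ_nonempty_iff.1 (Finset.nonempty_of_sum_ne_zero (hw₁ ▸ one_ne_zero))
  rcases le_or_gt d 1 with hd | hd
  · have := subsingleton_of_finrank_le_one (K := ℝ) (V := Fin d → ℝ) (by simpa using hd)
    rw [Subsingleton.elim p (x (Classical.arbitrary ι)), Nat.sub_eq_zero_of_le hd, pow_zero,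
      one_mul]
    exact (hxM _).2 j
  obtain ⟨τ, hτ, hτg⟩ := exists_linearMap_lift hf₀ hch hΩne (ha j)
  have hzC (i : ι) : z i ∈ chartCone f₀ Ω := hxz i ▸ chartMap_mem_chartCone hf₀ (h𝒞Ω (hxM i).1)
  have hK (i : ι) : coneCrossRatio (chartCone f₀ Ω) (z i) (τ (z i)) ≤ Real.exp (2 * r) := by
    rw [← hxz i]
    exact (hilbertDist_smul_le_iff hΩo hf₀ hch hτ hτg (h𝒞Ω (hxM i).1)).1 ((hxM i).2 j)
  rw [hilbertDist_smul_le_iff hΩo hf₀ hch hτ hτg hpΩ, ← hpz]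
  calc _ ≤ Real.exp (2 * r) ^ 2 := coneCrossRatio_sum_le (isOpen_chartCone hΩo) hτ
        mem_posDual_chartCone hw hzC (hpz ▸ chartMap_mem_chartCone hf₀ hpΩ) hK
    _ = Real.exp (2 * (2 * r)) := by rw [← Real.exp_nat_mul]; ring_nf
    _ ≤ Real.exp (2 * (2 ^ (d - 1) * r)) := by
        gcongr
        simpa using pow_le_pow_right₀ one_le_two (show 1 ≤ d - 1 by omega)

/-- **Lemma 7.8**: with `M_r = {x ∈ 𝒞 : H_Ω(x, a_j x) ≤ r for all j}` for
`a_1, …, a_m ∈ Aut(Ω)` and `𝒞 ⊆ Ω` a closed convex subset, the convex hull of `M_r`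
in `Ω` is contained in `M_{2^{d-1} r}`. -/
theorem convHull_Mr_subset {d : ℕ} (Ω 𝒞 : Set (PSp d))
    (hΩ : IsProperlyConvexDomain Ω)
    (h𝒞Ω : 𝒞 ⊆ Ω) (h𝒞conv : IsConvexSet 𝒞) (h𝒞cl : closure 𝒞 ∩ Ω ⊆ 𝒞)
    (m : ℕ) (a : Fin m → PGL d) (ha : ∀ j, a j ∈ aut Ω) (r : ℝ) (hr : 0 < r) :
    convHull Ω {x ∈ 𝒞 | ∀ j, hilbertDist Ω x (a j • x) ≤ r}
      ⊆ {x ∈ 𝒞 | ∀ j, hilbertDist Ω x (a j • x) ≤ 2 ^ (d - 1) * r} :=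
  convHull_Mr_subset_general Ω 𝒞 hΩ h𝒞Ω h𝒞conv m a ha r hr

end CCProj
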